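/- arXiv:2502.05184 — 4 statements merged into one kernel-verified Lean document; each statement's English description precedes it below -/
import Mathlib

section
/- Let Y be a Banach space, A : ℤ → L(Y) with ‖A(k)‖ ≤ c(k) for real numbers c(k) > 0 satisfying ∑_{v=1}^{∞} c(k−v)⋯c(k−1) < ∞ for every k ∈ ℤ, and let f : ℤ → Y be bounded. Then the series x(k) := f(k−1) + ∑_{j=−∞}^{k−2} A(k−1)⋯A(j+1) f(j) converges absolutely for every k ∈ ℤ, and x satisfies x(k+1) = A(k) x(k) + f(k) for all k ∈ ℤ. -/
open scoped BigOperators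

/-- `opProd A k v = A(k-1) ∘ A(k-2) ∘ ⋯ ∘ A(k-v)` (composition of `v` operators). -/
def opProd {Y : Type*} [NormedAddCommGroup Y] [NormedSpace ℂ Y]
    (A : ℤ → Y →L[ℂ] Y) (k : ℤ) : ℕ → (Y →L[ℂ] Y)
  | 0 => 1
  | v + 1 => opProd A k v ∘L A (k - ((v : ℤ) + 1))

/-!
The series is `x(k) = ∑_{v ≥ 0} A(k-1)⋯A(k-v) f(k-1-v)`; its terms are dominated by
`M · c(k-1)⋯c(k-v)`, so it converges absolutely. Shifting `k` to `k + 1` and pulling the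
leftmost factor `A(k)` out of every term except the first (`v = 0`, which is `f(k)`) gives
`x(k+1) = f(k) + A(k) x(k)`.
-/

section

variable {Y : Type*} [NormedAddCommGroup Y] [NormedSpace ℂ Y] (A : ℤ → Y →L[ℂ] Y)

lemma norm_opProd_le {c : ℤ → ℝ} (hAc : ∀ k, ‖A k‖ ≤ c k) (k : ℤ) :
    ∀ v : ℕ, ‖opProd A k v‖ ≤ ∏ i ∈ Finset.range v, c (k - 1 - (i : ℤ))
  | 0 => by rw [opProd, Finset.prod_range_zero]; exact ContinuousLinearMap.norm_id_le
  | v + 1 => by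
      have hshift : k - ((v : ℤ) + 1) = k - 1 - (v : ℤ) := by ring
      calc ‖opProd A k (v + 1)‖ ≤ ‖opProd A k v‖ * ‖A (k - 1 - (v : ℤ))‖ := by
            rw [← hshift]; exact ContinuousLinearMap.opNorm_comp_le _ _
        _ ≤ (∏ i ∈ Finset.range v, c (k - 1 - (i : ℤ))) * c (k - 1 - (v : ℤ)) :=
            mul_le_mul (norm_opProd_le hAc k v) (hAc _) (norm_nonneg _)
              (Finset.prod_nonneg fun _ _ => (norm_nonneg _).trans (hAc _))
        _ = ∏ i ∈ Finset.range (v + 1), c (k - 1 - (i : ℤ)) := (Finset.prod_range_succ _ _).symm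

lemma opProd_succ_succ (k : ℤ) : ∀ v : ℕ, opProd A (k + 1) (v + 1) = A k ∘L opProd A k v
  | 0 => by ext; simp [opProd]
  | v + 1 => by
      have hshift : k + 1 - ((((v + 1 : ℕ)) : ℤ) + 1) = k - ((v : ℤ) + 1) := by push_cast; ring
      rw [opProd, opProd_succ_succ k v, hshift, ContinuousLinearMap.comp_assoc, opProd]

lemma summable_norm_opProd_apply {c : ℤ → ℝ} (hAc : ∀ k, ‖A k‖ ≤ c k) (k : ℤ)
    (hsum : Summable (fun v : ℕ => ∏ i ∈ Finset.range (v + 1), c (k - 1 - (i : ℤ))))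
    {f : ℤ → Y} {M : ℝ} (hM : ∀ k, ‖f k‖ ≤ M) :
    Summable (fun v : ℕ => ‖opProd A k (v + 1) (f (k - 1 - ((v : ℤ) + 1)))‖) := by
  refine (hsum.mul_right M).of_nonneg_of_le (fun _ => norm_nonneg _) fun v => ?_
  calc ‖opProd A k (v + 1) (f (k - 1 - ((v : ℤ) + 1)))‖
      ≤ ‖opProd A k (v + 1)‖ * ‖f (k - 1 - ((v : ℤ) + 1))‖ := ContinuousLinearMap.le_opNorm _ _
    _ ≤ (∏ i ∈ Finset.range (v + 1), c (k - 1 - (i : ℤ))) * M :=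
        mul_le_mul (norm_opProd_le A hAc k (v + 1)) (hM _) (norm_nonneg _)
          (Finset.prod_nonneg fun _ _ => (norm_nonneg _).trans (hAc _))

/-- `x(k) = f(k-1) + ∑_{j ≤ k-2} A(k-1)⋯A(j+1) f(j)`, reindexed by `v = k - 2 - j`. -/
noncomputable def variationOfConstants (f : ℤ → Y) (k : ℤ) : Y :=
  f (k - 1) + ∑' v : ℕ, opProd A k (v + 1) (f (k - 1 - ((v : ℤ) + 1)))

variable {A}

lemma variationOfConstants_eq_tsum {f : ℤ → Y} {k : ℤ}
    (hs : Summable (fun v : ℕ => opProd A k (v + 1) (f (k - 1 - ((v : ℤ) + 1))))) :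
    variationOfConstants A f k = ∑' v : ℕ, opProd A k v (f (k - 1 - (v : ℤ))) := by
  rw [tsum_eq_zero_add' (by exact_mod_cast hs)]
  simp [variationOfConstants, opProd]

lemma variationOfConstants_succ {f : ℤ → Y} {k : ℤ}
    (hs : Summable (fun v : ℕ => opProd A k (v + 1) (f (k - 1 - ((v : ℤ) + 1))))) :
    variationOfConstants A f (k + 1) = A k (variationOfConstants A f k) + f k := by
  have hfull : Summable (fun v : ℕ => opProd A k v (f (k - 1 - (v : ℤ)))) :=
    (summable_nat_add_iff 1).mp (by exact_mod_cast hs)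
  have hterm : ∀ v : ℕ, opProd A (k + 1) (v + 1) (f (k + 1 - 1 - ((v : ℤ) + 1)))
      = A k (opProd A k v (f (k - 1 - (v : ℤ)))) := fun v => by
    rw [opProd_succ_succ, show k + 1 - 1 - ((v : ℤ) + 1) = k - 1 - (v : ℤ) by ring]; rfl
  rw [variationOfConstants_eq_tsum hs, variationOfConstants, tsum_congr hterm,
    ← (A k).map_tsum hfull, add_sub_cancel_right, add_comm]

end

theorem stmt4_general {Y : Type*} [NormedAddCommGroup Y] [NormedSpace ℂ Y] [CompleteSpace Y]
    (A : ℤ → Y →L[ℂ] Y) (c : ℤ → ℝ)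
    (hAc : ∀ k, ‖A k‖ ≤ c k)
    (hsum : ∀ k : ℤ, Summable (fun v : ℕ => ∏ i ∈ Finset.range (v + 1), c (k - 1 - (i : ℤ))))
    (f : ℤ → Y) (hf : ∃ M : ℝ, ∀ k : ℤ, ‖f k‖ ≤ M) :
    (∀ k : ℤ, Summable (fun v : ℕ => ‖opProd A k (v + 1) (f (k - 1 - ((v : ℤ) + 1)))‖)) ∧
    (∀ k : ℤ,
      (fun m : ℤ => f (m - 1) + ∑' v : ℕ, opProd A m (v + 1) (f (m - 1 - ((v : ℤ) + 1)))) (k + 1)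
        = A k ((fun m : ℤ =>
            f (m - 1) + ∑' v : ℕ, opProd A m (v + 1) (f (m - 1 - ((v : ℤ) + 1)))) k) + f k) := by
  obtain ⟨M, hM⟩ := hf
  have habs k := summable_norm_opProd_apply A hAc k (hsum k) hM
  exact ⟨habs, fun k => variationOfConstants_succ (habs k).of_norm⟩

/-- If `‖A k‖ ≤ c k` with `∑_{v≥1} c(k−v)⋯c(k−1) < ∞` for all `k`, and `f` is bounded,
then the series `x(k) = f(k−1) + ∑_{v=1}^∞ A(k−1)⋯A(k−v) f(k−1−v)` converges absolutely
and `x` solves `x(k+1) = A(k) x(k) + f(k)`. -/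
theorem stmt4 {Y : Type*} [NormedAddCommGroup Y] [NormedSpace ℂ Y] [CompleteSpace Y]
    (A : ℤ → Y →L[ℂ] Y) (c : ℤ → ℝ) (hcpos : ∀ k, 0 < c k)
    (hAc : ∀ k, ‖A k‖ ≤ c k)
    (hsum : ∀ k : ℤ, Summable (fun v : ℕ => ∏ i ∈ Finset.range (v + 1), c (k - 1 - (i : ℤ))))
    (f : ℤ → Y) (hf : ∃ M : ℝ, ∀ k : ℤ, ‖f k‖ ≤ M) :
    (∀ k : ℤ, Summable (fun v : ℕ => ‖opProd A k (v + 1) (f (k - 1 - ((v : ℤ) + 1)))‖)) ∧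
    (∀ k : ℤ,
      (fun m : ℤ => f (m - 1) + ∑' v : ℕ, opProd A m (v + 1) (f (m - 1 - ((v : ℤ) + 1)))) (k + 1)
        = A k ((fun m : ℤ =>
            f (m - 1) + ∑' v : ℕ, opProd A m (v + 1) (f (m - 1 - ((v : ℤ) + 1)))) k) + f k) :=
  stmt4_general A c hAc hsum f hf
end

section
/- Let Y be a Banach space, A : ℤ → L(Y) with ‖A(k)‖ ≤ c(k) where c(k) > 0, ∑_{v=1}^{∞} c(k−v)⋯c(k−1) < ∞ for every k ∈ ℤ, and sup_{k∈ℤ} c(k) < ∞. If the bounded sequence f : ℤ → Y satisfies f ≡ 0 and x : ℤ → Y is a bounded solution of x(k+1) = A(k)x(k) for all k ∈ ℤ, which is Bohr almost periodic, then x(k) = 0 for all k ∈ ℤ. -/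
open scoped BigOperators

def BohrAP {Y : Type*} [SeminormedAddGroup Y] (F : ℤ → Y) : Prop :=
  ∀ ε : ℝ, 0 < ε → ∃ l : ℤ, 0 < l ∧ ∀ t : ℤ, ∃ τ : ℤ,
    t ≤ τ ∧ τ ≤ t + l ∧ ∀ k : ℤ, ‖F (k + τ) - F k‖ ≤ ε

/-- Uniqueness: a bounded Bohr almost periodic solution of the homogeneous equation
`x(k+1) = A(k) x(k)` (the case `f ≡ 0`) vanishes identically, provided `‖A k‖ ≤ c k`,
`∑_{v≥1} c(k−v)⋯c(k−1) < ∞` for every `k`, and `sup_k c k < ∞`. -/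
theorem stmt5 {Y : Type*} [NormedAddCommGroup Y] [NormedSpace ℂ Y] [CompleteSpace Y]
    (A : ℤ → Y →L[ℂ] Y) (c : ℤ → ℝ) (hcpos : ∀ k, 0 < c k)
    (hAc : ∀ k, ‖A k‖ ≤ c k)
    (hsum : ∀ k : ℤ, Summable (fun v : ℕ => ∏ i ∈ Finset.range (v + 1), c (k - 1 - (i : ℤ))))
    (hcb : ∃ Mc : ℝ, ∀ k : ℤ, c k ≤ Mc)
    (x : ℤ → Y) (hxb : ∃ M : ℝ, ∀ k : ℤ, ‖x k‖ ≤ M)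
    (hxap : BohrAP x)
    (hxeq : ∀ k : ℤ, x (k + 1) = A k (x k)) :
    ∀ k : ℤ, x k = 0 := by
  obtain ⟨M, hM⟩ := hxb
  have hM0 : 0 ≤ M := le_trans (norm_nonneg (x 0)) (hM 0)
  -- key estimate: ‖x k‖ ≤ (∏_{i<v} c(k-1-i)) * M
  have key : ∀ (v : ℕ) (k : ℤ), ‖x k‖ ≤ (∏ i ∈ Finset.range v, c (k - 1 - (i : ℤ))) * M := by
    intro v
    induction v with
    | zero => intro k; simpa using hM k
    | succ v ih =>
      intro k
      have hx : x k = A (k - 1) (x (k - 1)) := by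
        have := hxeq (k - 1); simpa using this
      have h1 : ‖x k‖ ≤ c (k - 1) * ‖x (k - 1)‖ := by
        rw [hx]
        calc ‖A (k-1) (x (k-1))‖ ≤ ‖A (k-1)‖ * ‖x (k-1)‖ := (A (k-1)).le_opNorm _
          _ ≤ c (k-1) * ‖x (k-1)‖ :=
            mul_le_mul_of_nonneg_right (hAc _) (norm_nonneg _)
      have h2 := ih (k - 1)
      have hre : (∏ i ∈ Finset.range (v + 1), c (k - 1 - (i : ℤ)))
          = c (k - 1) * ∏ i ∈ Finset.range v, c (k - 1 - 1 - (i : ℤ)) := by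
        rw [Finset.prod_range_succ']
        simp only [Nat.cast_zero, sub_zero, Nat.cast_add, Nat.cast_one]
        rw [mul_comm]
        congr 1
        apply Finset.prod_congr rfl
        intro i _
        congr 1
        ring
      rw [hre, mul_assoc]
      calc ‖x k‖ ≤ c (k - 1) * ‖x (k - 1)‖ := h1
        _ ≤ c (k - 1) * ((∏ i ∈ Finset.range v, c (k - 1 - 1 - (i : ℤ))) * M) :=
          mul_le_mul_of_nonneg_left h2 (hcpos _).le
  intro k
  have htend : Filter.Tendsto
      (fun v : ℕ => (∏ i ∈ Finset.range (v + 1), c (k - 1 - (i : ℤ))) * M)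
      Filter.atTop (nhds 0) := by
    have := (hsum k).tendsto_atTop_zero
    simpa using this.mul_const M
  have hle : ‖x k‖ ≤ 0 :=
    ge_of_tendsto htend (Filter.Eventually.of_forall fun v => key (v + 1) k)
  exact norm_le_zero_iff.mp hle
end

section
/- If x : ℤ → Y is a Bohr almost periodic sequence in a Banach space Y, then sup_{k∈ℤ} ‖x(k)‖ = limsup_{k→+∞} ‖x(k)‖; in particular, if ‖x(k)‖ → 0 as k → +∞, then x(k) = 0 for all k ∈ ℤ. -/
open Filter

/-- The supremum formula for Bohr almost periodic sequences:
`sup_{k∈ℤ} ‖x(k)‖ = limsup_{k→+∞} ‖x(k)‖`; in particular, if `‖x(k)‖ → 0` as `k → +∞`,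
then `x ≡ 0`. -/
theorem stmt6 {Y : Type*} [NormedAddCommGroup Y] [NormedSpace ℂ Y] [CompleteSpace Y]
    (x : ℤ → Y) (hx : BohrAP x) :
    (⨆ k : ℤ, ‖x k‖) = limsup (fun k : ℤ => ‖x k‖) atTop ∧
    (Tendsto (fun k : ℤ => ‖x k‖) atTop (nhds 0) → ∀ k : ℤ, x k = 0) := by
  -- boundedness
  obtain ⟨l, hl, hτ⟩ := hx 1 one_pos
  set M : ℝ := ((Finset.Icc (0:ℤ) l).sup' ⟨0, by simp [hl.le]⟩ fun j => ‖x j‖) + 1 with hM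
  have hbd : ∀ k : ℤ, ‖x k‖ ≤ M := by
    intro k
    obtain ⟨τ, ht1, ht2, hsup⟩ := hτ (k - l)
    have h1 : ‖x ((k - τ) + τ) - x (k - τ)‖ ≤ 1 := hsup (k - τ)
    have h2 : (k - τ) + τ = k := by ring
    rw [h2] at h1
    have h3 : ‖x (k - τ)‖ ≤ (Finset.Icc (0:ℤ) l).sup' ⟨0, by simp [hl.le]⟩ fun j => ‖x j‖ := by
      apply Finset.le_sup' (fun j => ‖x j‖)
      simp only [Finset.mem_Icc]
      omega
    have hdec := norm_add_le (x k - x (k - τ)) (x (k - τ))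
    rw [sub_add_cancel] at hdec
    rw [hM]; linarith
  have hBdd : BddAbove (Set.range fun k : ℤ => ‖x k‖) := ⟨M, by rintro _ ⟨k, rfl⟩; exact hbd k⟩
  have hBU : IsBoundedUnder (· ≤ ·) atTop (fun k : ℤ => ‖x k‖) :=
    isBoundedUnder_of ⟨M, hbd⟩
  have hCo : IsCoboundedUnder (· ≤ ·) atTop (fun k : ℤ => ‖x k‖) :=
    isCoboundedUnder_le_of_le atTop fun k => norm_nonneg (x k)
  -- frequently large
  have hfreq : ∀ ε : ℝ, 0 < ε → ∀ k : ℤ, ∃ᶠ j in atTop, ‖x k‖ - ε ≤ ‖x j‖ := by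
    intro ε hε k
    obtain ⟨l', _, hτ'⟩ := hx ε hε
    rw [frequently_atTop]
    intro N
    obtain ⟨τ, ht1, _, hsup⟩ := hτ' (N - k)
    refine ⟨k + τ, by omega, ?_⟩
    have := hsup k
    have h4 := norm_sub_norm_le (x k) (x (k + τ))
    rw [norm_sub_rev] at h4
    linarith [hsup k]
  have hle : (⨆ k : ℤ, ‖x k‖) ≤ limsup (fun k : ℤ => ‖x k‖) atTop := by
    apply ciSup_le
    intro k
    apply le_of_forall_pos_le_add
    intro ε hε
    have := le_limsup_of_frequently_le (hfreq ε hε k) hBU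
    linarith
  have hge : limsup (fun k : ℤ => ‖x k‖) atTop ≤ ⨆ k : ℤ, ‖x k‖ :=
    limsup_le_of_le hCo (Eventually.of_forall fun k => le_ciSup hBdd k)
  have heq := le_antisymm hle hge
  refine ⟨heq, fun htend k => ?_⟩
  have h0 : limsup (fun k : ℤ => ‖x k‖) atTop = 0 := htend.limsup_eq
  have : ‖x k‖ ≤ 0 := by
    calc ‖x k‖ ≤ ⨆ k : ℤ, ‖x k‖ := le_ciSup hBdd k
      _ = 0 := by rw [heq, h0]
  simpa [le_antisymm this (norm_nonneg _)] using norm_eq_zero.mp (le_antisymm this (norm_nonneg _))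
end

section
/- Let Y be a Banach space, ω ∈ ℕ, c ∈ ℂ with |c| ≥ 1, and A : ℤ → L(Y) with A(k+ω) = A(k) for all k ∈ ℤ and ‖A(k)‖ ≤ c₀(k), where c₀(k+ω) = c₀(k) > 0 and lim_{l→∞} c₀(−1)c₀(−2)⋯c₀(−l) = 0. If x : ℤ → Y is an (ω,c)-periodic solution of x(k+1) = A(k)x(k) for all k ∈ ℤ, then x(k) = 0 for all k ∈ ℤ. -/
/-!
The recursion gives `‖x 0‖ ≤ c₀(-1)⋯c₀(-l) ‖x (-l)‖`, and `(ω,c)`-periodicity with `|c| ≥ 1`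
gives `‖x (-nω)‖ ≤ ‖x 0‖`. Taking `l = nω` and letting `n → ∞` forces `x 0 = 0`. The recursion
then propagates the zero forward to all `k ≥ 0`, and periodicity with `c ≠ 0` back to all of `ℤ`.
-/

open Filter Finset

section TwistedPeriodic

theorem add_mul_period_eq_pow_smul {M E : Type*} [Monoid M] [MulAction M E] {x : ℤ → E} {c : M}
    {ω : ℤ} (hx : ∀ k, x (k + ω) = c • x k) (k : ℤ) (n : ℕ) :
    x (k + n * ω) = c ^ n • x k := by
  induction n with
  | zero => simp
  | succ n ih =>
    rw [Nat.cast_succ, add_one_mul, ← add_assoc, hx, ih, pow_succ', mul_smul]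

variable {𝕜 E : Type*} [NormedField 𝕜] [SeminormedAddCommGroup E] [NormedSpace 𝕜 E]
  {x : ℤ → E} {c : 𝕜} {ω : ℤ}

theorem norm_sub_mul_period_le (hx : ∀ k, x (k + ω) = c • x k) (hc : 1 ≤ ‖c‖) (k : ℤ) (n : ℕ) :
    ‖x (k - n * ω)‖ ≤ ‖x k‖ :=
  calc ‖x (k - n * ω)‖ ≤ ‖c‖ ^ n * ‖x (k - n * ω)‖ :=
        le_mul_of_one_le_left (norm_nonneg _) (one_le_pow₀ hc)
    _ = ‖x k‖ := by
      rw [← norm_pow, ← norm_smul, ← add_mul_period_eq_pow_smul hx, sub_add_cancel]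

end TwistedPeriodic

section LinearRecursion

variable {𝕜 E : Type*} [NontriviallyNormedField 𝕜] [SeminormedAddCommGroup E] [NormedSpace 𝕜 E]
  {A : ℤ → E →L[𝕜] E} {x : ℤ → E}

theorem norm_le_prod_mul_norm_sub {c₀ : ℤ → ℝ} (hAc : ∀ k, ‖A k‖ ≤ c₀ k)
    (hx : ∀ k, x (k + 1) = A k (x k)) (k : ℤ) (l : ℕ) :
    ‖x k‖ ≤ (∏ i ∈ range l, c₀ (k - 1 - i)) * ‖x (k - l)‖ := by
  induction l with
  | zero => simp
  | succ l ih =>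
    have hstep : ‖x (k - l)‖ ≤ c₀ (k - 1 - l) * ‖x (k - 1 - l)‖ := by
      rw [show k - l = k - 1 - l + 1 by ring, hx]
      exact (A _).le_of_opNorm_le (hAc _) _
    have hcast : k - 1 - l = k - (l + 1 : ℕ) := by push_cast; ring
    calc ‖x k‖ ≤ (∏ i ∈ range l, c₀ (k - 1 - i)) * ‖x (k - l)‖ := ih
      _ ≤ (∏ i ∈ range l, c₀ (k - 1 - i)) * (c₀ (k - 1 - l) * ‖x (k - 1 - l)‖) := by
        gcongr
        exact prod_nonneg fun i _ => (norm_nonneg _).trans (hAc _)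
      _ = (∏ i ∈ range (l + 1), c₀ (k - 1 - i)) * ‖x (k - (l + 1 : ℕ))‖ := by
        rw [prod_range_succ, mul_assoc, ← hcast]

theorem eq_zero_of_nonneg_of_eq_zero (hx : ∀ k, x (k + 1) = A k (x k)) (h0 : x 0 = 0) {k : ℤ}
    (hk : 0 ≤ k) : x k = 0 := by
  induction k, hk using Int.leInduction with
  | base => exact h0
  | succ k _ ih => rw [hx, ih, map_zero]

end LinearRecursion

theorem eq_zero_of_forall_nonneg_eq_zero {𝕜 E : Type*} [Field 𝕜] [AddCommGroup E] [Module 𝕜 E]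
    {x : ℤ → E} {c : 𝕜} {ω : ℤ} (hx : ∀ k, x (k + ω) = c • x k) (hω : 0 < ω) (hc : c ≠ 0)
    (h : ∀ k, 0 ≤ k → x k = 0) (k : ℤ) : x k = 0 := by
  have hshift : 0 ≤ k + k.natAbs * ω := by
    have hk : -k ≤ k.natAbs := by lia
    nlinarith [Int.natCast_nonneg k.natAbs]
  have := h _ hshift
  rwa [add_mul_period_eq_pow_smul hx, smul_eq_zero, or_iff_right (pow_ne_zero _ hc)] at this

theorem stmt8_general {Y : Type*} [NormedAddCommGroup Y] [NormedSpace ℂ Y]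
    (ω : ℕ) (hω : 0 < ω) (c : ℂ) (hc : 1 ≤ ‖c‖)
    (A : ℤ → Y →L[ℂ] Y)
    (c₀ : ℤ → ℝ) (hAc : ∀ k, ‖A k‖ ≤ c₀ k)
    (hprod : Tendsto (fun l : ℕ => ∏ i ∈ Finset.range l, c₀ (-1 - (i : ℤ))) atTop (nhds 0))
    (x : ℤ → Y) (hxper : ∀ k : ℤ, x (k + ω) = c • x k)
    (hxeq : ∀ k : ℤ, x (k + 1) = A k (x k)) :
    ∀ k : ℤ, x k = 0 := by
  have hbound (n : ℕ) : ‖x 0‖ ≤ (∏ i ∈ range (n * ω), c₀ (-1 - i)) * ‖x 0‖ :=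
    calc ‖x 0‖ ≤ (∏ i ∈ range (n * ω), c₀ (-1 - i)) * ‖x (0 - n * ω)‖ := by
          simpa using norm_le_prod_mul_norm_sub hAc hxeq 0 (n * ω)
      _ ≤ (∏ i ∈ range (n * ω), c₀ (-1 - i)) * ‖x 0‖ := by
        gcongr
        · exact prod_nonneg fun i _ => (norm_nonneg _).trans (hAc _)
        · exact norm_sub_mul_period_le hxper hc 0 n
  have hlim : Tendsto (fun n : ℕ => (∏ i ∈ range (n * ω), c₀ (-1 - i)) * ‖x 0‖) atTop (nhds 0) := by
    simpa using (hprod.comp (tendsto_id.atTop_mul_const' hω)).mul_const ‖x 0‖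
  have hx0 : x 0 = 0 := norm_le_zero_iff.mp (ge_of_tendsto' hlim hbound)
  have hc0 : c ≠ 0 := norm_pos_iff.mp (one_pos.trans_le hc)
  exact eq_zero_of_forall_nonneg_eq_zero hxper (by exact_mod_cast hω) hc0
    fun k hk => eq_zero_of_nonneg_of_eq_zero hxeq hx0 hk

/-- If `|c| ≥ 1`, `A` is `ω`-periodic with `‖A k‖ ≤ c₀ k`, `c₀` `ω`-periodic and
`c₀(−1)c₀(−2)⋯c₀(−l) → 0` as `l → ∞`, then every `(ω,c)`-periodic solution of
`x(k+1) = A(k) x(k)` vanishes identically. -/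
theorem stmt8 {Y : Type*} [NormedAddCommGroup Y] [NormedSpace ℂ Y] [CompleteSpace Y]
    (ω : ℕ) (hω : 0 < ω) (c : ℂ) (hc : 1 ≤ ‖c‖)
    (A : ℤ → Y →L[ℂ] Y) (hAper : ∀ k : ℤ, A (k + ω) = A k)
    (c₀ : ℤ → ℝ) (hc₀pos : ∀ k, 0 < c₀ k) (hAc : ∀ k, ‖A k‖ ≤ c₀ k)
    (hc₀per : ∀ k : ℤ, c₀ (k + ω) = c₀ k)
    (hprod : Tendsto (fun l : ℕ => ∏ i ∈ Finset.range l, c₀ (-1 - (i : ℤ))) atTop (nhds 0))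
    (x : ℤ → Y) (hxper : ∀ k : ℤ, x (k + ω) = c • x k)
    (hxeq : ∀ k : ℤ, x (k + 1) = A k (x k)) :
    ∀ k : ℤ, x k = 0 :=
  stmt8_general ω hω c hc A c₀ hAc hprod x hxper hxeq
end
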